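/- Let f be a real-valued function on disorder configurations that is gauge invariant, i.e. f(τ^σ) = f(τ) for all τ and all σ : V → {−1, 1}. Then for all real γ and β_p, the average of f under the correlated-disorder distribution P(τ) = Z_τ(γ)·exp(β_p·Σ_{e∈E} τ(e)) / ((2·cosh γ)^{N_B} · Z_τ(β_p)) equals its average under the i.i.d. Edwards–Anderson distribution with parameter γ: Σ_τ P(τ)·f(τ) = Σ_τ (Π_{e∈E} exp(γ·τ(e))/(2·cosh γ)) · f(τ). -/
import Mathlib


open Finset

/-- Ising energy `H_τ(S) = Σ_e τ(e)·S(i(e))·S(j(e))`, spins valued in `ℤˣ = {−1, 1}`. -/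
noncomputable def isingH {V E : Type*} [Fintype E] (i j : E → V)
    (τ : E → ℤˣ) (S : V → ℤˣ) : ℝ :=
  ∑ e, ((τ e : ℤ) : ℝ) * ((S (i e) : ℤ) : ℝ) * ((S (j e) : ℤ) : ℝ)

/-- Partition function `Z_τ(β) = Σ_S exp(β·H_τ(S))`. -/
noncomputable def isingZ {V E : Type*} [Fintype V] [DecidableEq V] [Fintype E]
    (i j : E → V) (β : ℝ) (τ : E → ℤˣ) : ℝ :=
  ∑ S : V → ℤˣ, Real.exp (β * isingH i j τ S)

/-- Gauge transform `τ^σ(e) = τ(e)·σ(i(e))·σ(j(e))`. -/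
def gaugeT {V E : Type*} (i j : E → V) (σ : V → ℤˣ) (τ : E → ℤˣ) : E → ℤˣ :=
  fun e => τ e * σ (i e) * σ (j e)

section aux
variable {V E : Type*} [Fintype V] [DecidableEq V] [Fintype E] [DecidableEq E]

lemma gaugeT_invol (i j : E → V) (σ : V → ℤˣ) : Function.Involutive (gaugeT i j σ) := by
  intro τ; funext e
  simp only [gaugeT]
  simp only [mul_assoc, mul_comm, mul_left_comm, Int.units_mul_self]
  rw [← mul_assoc, Int.units_mul_self, one_mul, ← mul_assoc, Int.units_mul_self, one_mul]

lemma sum_gaugeT (i j : E → V) (σ : V → ℤˣ) (g : (E → ℤˣ) → ℝ) :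
    ∑ τ : E → ℤˣ, g (gaugeT i j σ τ) = ∑ τ, g τ :=
  Fintype.sum_bijective _ ((gaugeT_invol i j σ).bijective) _ _ (fun τ => rfl)

lemma sum_val_gaugeT (i j : E → V) (σ : V → ℤˣ) (τ : E → ℤˣ) :
    ∑ e, ((gaugeT i j σ τ e : ℤ) : ℝ) = isingH i j τ σ := by
  unfold gaugeT isingH
  refine Finset.sum_congr rfl fun e _ => ?_
  push_cast
  ring

lemma isingH_gaugeT (i j : E → V) (σ : V → ℤˣ) (τ : E → ℤˣ) (S : V → ℤˣ) :
    isingH i j (gaugeT i j σ τ) S = isingH i j τ (fun v => σ v * S v) := by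
  unfold gaugeT isingH
  refine Finset.sum_congr rfl fun e _ => ?_
  push_cast
  ring

lemma isingZ_gaugeT (i j : E → V) (β : ℝ) (σ : V → ℤˣ) (τ : E → ℤˣ) :
    isingZ i j β (gaugeT i j σ τ) = isingZ i j β τ := by
  unfold isingZ
  simp only [isingH_gaugeT]
  have hb : Function.Bijective (fun S : V → ℤˣ => fun v => σ v * S v) := by
    have : Function.Involutive (fun S : V → ℤˣ => fun v => σ v * S v) := by
      intro S; funext v
      simp [← mul_assoc, Int.units_mul_self]
    exact this.bijective
  exact Fintype.sum_bijective _ hb _ _ (fun S => rfl)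

lemma isingZ_pos (i j : E → V) (β : ℝ) (τ : E → ℤˣ) : 0 < isingZ i j β τ :=
  Finset.sum_pos (fun S _ => Real.exp_pos _) Finset.univ_nonempty

end aux

/-- for gauge-invariant , the correlated-disorder average equals the
i.i.d. Edwards–Anderson average with parameter γ. -/
theorem stmt_4 {V E : Type*} [Fintype V] [DecidableEq V] [Fintype E] [DecidableEq E]
    (i j : E → V) (hij : ∀ e, i e ≠ j e)
    (f : (E → ℤˣ) → ℝ)
    (hf : ∀ (τ : E → ℤˣ) (σ : V → ℤˣ), f (gaugeT i j σ τ) = f τ)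
    (γ βp : ℝ) :
    ∑ τ : E → ℤˣ,
        (isingZ i j γ τ * Real.exp (βp * ∑ e, ((τ e : ℤ) : ℝ)) /
          ((2 * Real.cosh γ) ^ (Fintype.card E) * isingZ i j βp τ)) * f τ
      = ∑ τ : E → ℤˣ,
          (∏ e, Real.exp (γ * ((τ e : ℤ) : ℝ)) / (2 * Real.cosh γ)) * f τ := by
  set D : ℝ := (2 * Real.cosh γ) ^ (Fintype.card E) with hD
  set c : ℝ := (Fintype.card (V → ℤˣ) : ℝ) with hc
  have hc0 : c ≠ 0 := by
    simp [hc, Fintype.card_ne_zero]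
  -- common value
  have key : ∀ (β : ℝ) (g : (E → ℤˣ) → ℝ),
      (∀ τ σ, g (gaugeT i j σ τ) = g τ) →
      c * ∑ τ : E → ℤˣ, Real.exp (β * ∑ e, ((τ e : ℤ) : ℝ)) * g τ
        = ∑ τ : E → ℤˣ, isingZ i j β τ * g τ := by
    intro β g hg
    have h1 : ∀ σ : V → ℤˣ,
        ∑ τ : E → ℤˣ, Real.exp (β * ∑ e, ((τ e : ℤ) : ℝ)) * g τ
          = ∑ τ : E → ℤˣ, Real.exp (β * isingH i j τ σ) * g τ := by
      intro σ
      rw [← sum_gaugeT i j σ (fun τ => Real.exp (β * ∑ e, ((τ e : ℤ) : ℝ)) * g τ)]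
      refine Finset.sum_congr rfl fun τ _ => ?_
      rw [sum_val_gaugeT, hg]
    calc c * ∑ τ : E → ℤˣ, Real.exp (β * ∑ e, ((τ e : ℤ) : ℝ)) * g τ
        = ∑ σ : V → ℤˣ, ∑ τ : E → ℤˣ, Real.exp (β * ∑ e, ((τ e : ℤ) : ℝ)) * g τ := by
          rw [Finset.sum_const, Finset.card_univ, nsmul_eq_mul]
      _ = ∑ σ : V → ℤˣ, ∑ τ : E → ℤˣ, Real.exp (β * isingH i j τ σ) * g τ :=
          Finset.sum_congr rfl fun σ _ => h1 σ
      _ = ∑ τ : E → ℤˣ, (∑ σ : V → ℤˣ, Real.exp (β * isingH i j τ σ)) * g τ := by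
          rw [Finset.sum_comm]
          exact Finset.sum_congr rfl fun τ _ => (Finset.sum_mul _ _ _).symm
      _ = ∑ τ : E → ℤˣ, isingZ i j β τ * g τ := by
          refine Finset.sum_congr rfl fun τ _ => ?_
          rw [isingZ]
  -- LHS
  have hL : c * ∑ τ : E → ℤˣ,
      (isingZ i j γ τ * Real.exp (βp * ∑ e, ((τ e : ℤ) : ℝ)) / (D * isingZ i j βp τ)) * f τ
      = ∑ τ : E → ℤˣ, isingZ i j γ τ * f τ / D := by
    have hrw : ∀ τ : E → ℤˣ,
        (isingZ i j γ τ * Real.exp (βp * ∑ e, ((τ e : ℤ) : ℝ)) / (D * isingZ i j βp τ)) * f τ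
        = Real.exp (βp * ∑ e, ((τ e : ℤ) : ℝ)) *
            (isingZ i j γ τ * f τ / (D * isingZ i j βp τ)) := by
      intro τ; ring
    simp only [hrw]
    rw [key βp (fun τ => isingZ i j γ τ * f τ / (D * isingZ i j βp τ)) (by
      intro τ σ
      simp only [isingZ_gaugeT, hf])]
    refine Finset.sum_congr rfl fun τ _ => ?_
    have hz : isingZ i j βp τ ≠ 0 := (isingZ_pos i j βp τ).ne'
    field_simp
  -- RHS
  have hR : c * ∑ τ : E → ℤˣ,
      (∏ e, Real.exp (γ * ((τ e : ℤ) : ℝ)) / (2 * Real.cosh γ)) * f τ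
      = ∑ τ : E → ℤˣ, isingZ i j γ τ * f τ / D := by
    have hrw : ∀ τ : E → ℤˣ,
        (∏ e, Real.exp (γ * ((τ e : ℤ) : ℝ)) / (2 * Real.cosh γ)) * f τ
        = Real.exp (γ * ∑ e, ((τ e : ℤ) : ℝ)) * (f τ / D) := by
      intro τ
      rw [Finset.prod_div_distrib, Finset.prod_const, Finset.card_univ,
        ← Real.exp_sum, ← Finset.mul_sum]
      rw [hD]; ring
    simp only [hrw]
    rw [key γ (fun τ => f τ / D) (by intro τ σ; simp only [hf])]
    refine Finset.sum_congr rfl fun τ _ => ?_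
    ring
  exact mul_left_cancel₀ hc0 (hL.trans hR.symm)
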